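/- arXiv:2404.02241 — 5 statements merged into one kernel-verified Lean document; each statement's English description precedes it below -/
import Mathlib

section
/- Under the SGD setting with β-strong convexity, E[‖ĝ_n‖²] ≤ G² for all n, and step sizes η_n = 1/(βn), every iterate satisfies E[‖θ_n − θ*‖²] ≤ 2G²/(β² n) for all n ≥ 1. -/
/-!
Strong convexity makes the gradient strongly monotone, and the gradient vanishes at the minimizer,
so `β ‖x - θ*‖² ≤ ⟪∇f x, x - θ*⟫`. Expanding `‖θₙ₊₁ - θ*‖² = ‖θₙ - θ*‖² - 2ηₙ ⟪ĝₙ, θₙ - θ*⟫ + ηₙ² ‖ĝₙ‖²`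
and replacing `ĝₙ` by its conditional expectation given `θₙ` in the cross term gives the recursion
`eₙ₊₁ ≤ (1 - 2/n) eₙ + G²/(β² n²)` for `eₙ = E‖θₙ - θ*‖²`, whose solutions satisfy `eₙ ≤ 2G²/(β² n)`.
-/

open MeasureTheory
open scoped RealInnerProductSpace

section Gradient

variable {H : Type*} [NormedAddCommGroup H] [InnerProductSpace ℝ H] [CompleteSpace H] {f : H → ℝ}

theorem IsLocalMin.gradient_eq_zero {a : H} (h : IsLocalMin f a) : gradient f a = 0 := by
  simp [gradient, h.fderiv_eq_zero]

theorem mul_sq_norm_sub_le_inner_gradient_sub_gradient {β : ℝ}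
    (hconv : ∀ x y : H, f y ≥ f x + ⟪gradient f x, y - x⟫ + β / 2 * ‖y - x‖ ^ 2) (x y : H) :
    β * ‖x - y‖ ^ 2 ≤ ⟪gradient f x - gradient f y, x - y⟫ := by
  have hxy := hconv x y
  have hyx := hconv y x
  rw [← neg_sub x y, inner_neg_right, norm_neg] at hxy
  rw [inner_sub_left]
  linarith

end Gradient

theorem le_two_mul_div_of_succ_le {e : ℕ → ℝ} {c : ℝ} (he : ∀ n, 0 ≤ e n)
    (hrec : ∀ n : ℕ, 1 ≤ n → e (n + 1) ≤ (1 - 2 / n) * e n + c / n ^ 2) :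
    ∀ n : ℕ, 1 ≤ n → e n ≤ 2 * c / n := by
  have h₁ : e 1 + e 2 ≤ c := by
    have := hrec 1 le_rfl
    norm_num at this
    linarith
  have hc : 0 ≤ c := by linarith [he 1, he 2]
  refine Nat.le_induction (by rw [Nat.cast_one, div_one]; linarith [he 2]) fun n hn ih => ?_
  obtain rfl | hn₂ := eq_or_lt_of_le hn
  · rw [show ((1 + 1 : ℕ) : ℝ) = 2 by norm_num]
    linarith [he 1]
  have hn' : (2 : ℝ) ≤ n := by exact_mod_cast hn₂
  calc e (n + 1) ≤ (1 - 2 / n) * e n + c / n ^ 2 := hrec n hn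
    _ ≤ (1 - 2 / n) * (2 * c / n) + c / n ^ 2 := by
        gcongr
        rwa [sub_nonneg, div_le_one (by positivity)]
    _ = (2 * n - 3) * c / n ^ 2 := by field_simp; ring
    _ ≤ 2 * c / ↑(n + 1) := by
        rw [div_le_div_iff₀ (by positivity) (by positivity)]
        push_cast
        nlinarith [mul_nonneg hc (by linarith : (0:ℝ) ≤ n + 3)]

section CondExp

variable {Ω H : Type*} [NormedAddCommGroup H] [InnerProductSpace ℝ H] [CompleteSpace H]
  {m m₀ : MeasurableSpace Ω} {μ : Measure Ω}

theorem integral_inner_condExp_of_stronglyMeasurable [IsFiniteMeasure μ] (hm : m ≤ m₀)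
    {X Y : Ω → H} (hX : StronglyMeasurable[m] X) (hX₂ : MemLp X 2 μ) (hY : MemLp Y 2 μ) :
    Integrable (fun ω => ⟪μ[Y|m] ω, X ω⟫) μ ∧
      ∫ ω, ⟪Y ω, X ω⟫ ∂μ = ∫ ω, ⟪μ[Y|m] ω, X ω⟫ ∂μ := by
  have hYX : Integrable (fun ω => ⟪Y ω, X ω⟫) μ :=
    memLp_one_iff_integrable.1 <| (innerSL ℝ).memLp_of_bilin 1 hY hX₂
  have hpull :=
    condExp_bilin_of_stronglyMeasurable_right (innerSL ℝ) hX hYX (hY.integrable one_le_two)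
  exact ⟨integrable_condExp.congr hpull,
    (integral_condExp hm).symm.trans (integral_congr_ae hpull)⟩

variable [MeasurableSpace H] [BorelSpace H]

/-- A `Measurable` map into a non-separable `H` need not be strongly measurable; projecting it onto
the closed span of a separable set repairs this without changing inner products with that set. -/
theorem exists_stronglyMeasurable_inner_eq {X : Ω → H} (hX : Measurable[m] X) {s : Set H}
    (hs : TopologicalSpace.IsSeparable s) :
    ∃ X' : Ω → H, StronglyMeasurable[m] X' ∧ (∀ ω, ‖X' ω‖ ≤ ‖X ω‖) ∧
      ∀ v ∈ s, ∀ ω, ⟪v, X' ω⟫ = ⟪v, X ω⟫ := by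
  set K := (Submodule.span ℝ s).topologicalClosure
  have : CompleteSpace K := (Submodule.isClosed_topologicalClosure _).completeSpace_coe
  refine ⟨fun ω => K.starProjection (X ω), ?_, fun ω => K.norm_starProjection_apply_le _,
    fun v hv ω => ?_⟩
  · refine stronglyMeasurable_iff_measurable_separable.2
      ⟨K.starProjection.continuous.measurable.comp hX, ?_⟩
    refine (hs.span (R := ℝ)).closure.mono ?_
    rintro _ ⟨ω, rfl⟩
    exact K.starProjection_apply_mem (X ω)
  · have hvK : v ∈ K := Submodule.le_topologicalClosure _ (Submodule.subset_span hv)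
    rw [← K.inner_starProjection_left_eq_right, K.starProjection_eq_self_iff.2 hvK]

theorem integral_inner_condExp [IsFiniteMeasure μ] (hm : m ≤ m₀) {X Y : Ω → H}
    (hX : Measurable[m] X) (hX₂ : Integrable (fun ω => ‖X ω‖ ^ 2) μ) (hY : MemLp Y 2 μ) :
    Integrable (fun ω => ⟪μ[Y|m] ω, X ω⟫) μ ∧
      ∫ ω, ⟪Y ω, X ω⟫ ∂μ = ∫ ω, ⟪μ[Y|m] ω, X ω⟫ ∂μ := by
  obtain ⟨X', hX'm, hX'norm, hX'inner⟩ := exists_stronglyMeasurable_inner_eq hX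
    (hY.1.stronglyMeasurable_mk.isSeparable_range.union
      (stronglyMeasurable_condExp.mono hm).isSeparable_range)
  have hX'₂ : MemLp X' 2 μ := by
    refine (memLp_two_iff_integrable_sq_norm (hX'm.mono hm).aestronglyMeasurable).2
      (hX₂.mono' ((hX'm.mono hm).aestronglyMeasurable.norm.pow 2) (ae_of_all _ fun ω => ?_))
    rw [Real.norm_of_nonneg (by positivity)]
    exact pow_le_pow_left₀ (norm_nonneg _) (hX'norm ω) 2
  have hY_inner : ∀ᵐ ω ∂μ, ⟪Y ω, X ω⟫ = ⟪Y ω, X' ω⟫ := by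
    filter_upwards [hY.1.ae_eq_mk] with ω hω
    rw [hω, hX'inner _ (Or.inl ⟨ω, rfl⟩)]
  have hcondY_inner : ∀ ω, ⟪μ[Y|m] ω, X ω⟫ = ⟪μ[Y|m] ω, X' ω⟫ := fun ω =>
    (hX'inner _ (Or.inr ⟨ω, rfl⟩) ω).symm
  obtain ⟨hint, heq⟩ := integral_inner_condExp_of_stronglyMeasurable hm hX'm hX'₂ hY
  simp only [← hcondY_inner] at hint heq
  exact ⟨hint, (integral_congr_ae hY_inner).trans heq⟩

theorem mul_integral_sq_norm_le_integral_inner [IsFiniteMeasure μ] (hm : m ≤ m₀) {β : ℝ}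
    (hβ : 0 < β) {X Y : Ω → H} (hX : Measurable[m] X)
    (hX₂ : Integrable (fun ω => ‖X ω‖ ^ 2) μ) (hY₂ : Integrable (fun ω => ‖Y ω‖ ^ 2) μ)
    (hdescent : ∀ᵐ ω ∂μ, β * ‖X ω‖ ^ 2 ≤ ⟪μ[Y|m] ω, X ω⟫) :
    β * ∫ ω, ‖X ω‖ ^ 2 ∂μ ≤ ∫ ω, ⟪Y ω, X ω⟫ ∂μ := by
  by_cases hY : Integrable Y μ
  · obtain ⟨hint, heq⟩ :=
      integral_inner_condExp hm hX hX₂ ((memLp_two_iff_integrable_sq_norm hY.1).2 hY₂)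
    rw [heq, ← integral_const_mul]
    exact integral_mono_ae (hX₂.const_mul β) hint hdescent
  · -- Without integrability `μ[Y|m] = 0`, so `hdescent` forces `X = 0` almost everywhere.
    have hX0 : ∀ᵐ ω ∂μ, X ω = 0 := by
      filter_upwards [hdescent] with ω hω
      rw [condExp_of_not_integrable hY, Pi.zero_apply, inner_zero_left] at hω
      have : ‖X ω‖ ^ 2 ≤ 0 := nonpos_of_mul_nonpos_right hω hβ
      simpa using this
    have hX₂0 : (fun ω => ‖X ω‖ ^ 2) =ᵐ[μ] 0 := hX0.mono fun ω hω => by simp [hω]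
    have hinner0 : (fun ω => ⟪Y ω, X ω⟫) =ᵐ[μ] 0 := hX0.mono fun ω hω => by simp [hω]
    simp [integral_congr_ae hX₂0, integral_congr_ae hinner0]

theorem integral_sq_norm_sub_smul_le [IsFiniteMeasure μ] (hm : m ≤ m₀) {β η : ℝ}
    (hβ : 0 < β) (hη : 0 < η) {X Y : Ω → H} (hX : Measurable[m] X)
    (hX₂ : Integrable (fun ω => ‖X ω‖ ^ 2) μ) (hY₂ : Integrable (fun ω => ‖Y ω‖ ^ 2) μ)
    (hstep₂ : Integrable (fun ω => ‖X ω - η • Y ω‖ ^ 2) μ)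
    (hdescent : ∀ᵐ ω ∂μ, β * ‖X ω‖ ^ 2 ≤ ⟪μ[Y|m] ω, X ω⟫) :
    ∫ ω, ‖X ω - η • Y ω‖ ^ 2 ∂μ ≤
      (1 - 2 * η * β) * ∫ ω, ‖X ω‖ ^ 2 ∂μ + η ^ 2 * ∫ ω, ‖Y ω‖ ^ 2 ∂μ := by
  have hexpand : ∀ ω, ‖X ω - η • Y ω‖ ^ 2 =
      ‖X ω‖ ^ 2 - 2 * η * ⟪Y ω, X ω⟫ + η ^ 2 * ‖Y ω‖ ^ 2 := fun ω => by
    rw [norm_sub_sq_real, real_inner_smul_right, real_inner_comm, norm_smul, mul_pow,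
      Real.norm_eq_abs, sq_abs]
    ring
  have hinner : Integrable (fun ω => ⟪Y ω, X ω⟫) μ := by
    refine (((hX₂.add (hY₂.const_mul (η ^ 2))).sub hstep₂).div_const (2 * η)).congr
      (ae_of_all _ fun ω => ?_)
    simp only [Pi.add_apply, Pi.sub_apply, hexpand]
    field_simp
    ring
  have hcross := hinner.const_mul (2 * η)
  simp only [hexpand]
  rw [integral_add (f := fun ω => ‖X ω‖ ^ 2 - 2 * η * ⟪Y ω, X ω⟫) (hX₂.sub hcross)
      (hY₂.const_mul _), integral_sub hX₂ hcross, integral_const_mul, integral_const_mul]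
  nlinarith [mul_integral_sq_norm_le_integral_inner hm hβ hX hX₂ hY₂ hdescent]

end CondExp

theorem sgd_iterate_distance_bound_general
    {Ω : Type*} [MeasurableSpace Ω] {μ : Measure Ω} [IsProbabilityMeasure μ]
    {H : Type*} [NormedAddCommGroup H] [InnerProductSpace ℝ H] [CompleteSpace H]
    [MeasurableSpace H] [BorelSpace H]
    {β G : ℝ} (hβ : 0 < β)
    {f : H → ℝ}
    (hconv : ∀ x y : H,
      f y ≥ f x + ⟪gradient f x, y - x⟫ + β / 2 * ‖y - x‖ ^ 2)
    {θstar : H} (hmin : ∀ x : H, f θstar ≤ f x)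
    (θ g : ℕ → Ω → H)
    (hθmeas : ∀ n, Measurable (θ n))
    (hrec : ∀ n : ℕ, 1 ≤ n → ∀ ω, θ (n + 1) ω = θ n ω - (1 / (β * n)) • g n ω)
    (hunbiased : ∀ n : ℕ, 1 ≤ n →
      μ[g n | MeasurableSpace.comap (θ n) inferInstance]
        =ᵐ[μ] fun ω => gradient f (θ n ω))
    (hg2int : ∀ n : ℕ, 1 ≤ n → Integrable (fun ω => ‖g n ω‖ ^ 2) μ)
    (hg2 : ∀ n : ℕ, 1 ≤ n → ∫ ω, ‖g n ω‖ ^ 2 ∂μ ≤ G ^ 2)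
    (hθint : ∀ n : ℕ, 1 ≤ n → Integrable (fun ω => ‖θ n ω - θstar‖ ^ 2) μ) :
    ∀ n : ℕ, 1 ≤ n → ∫ ω, ‖θ n ω - θstar‖ ^ 2 ∂μ ≤ 2 * G ^ 2 / (β ^ 2 * n) := by
  have hgrad₀ : gradient f θstar = 0 :=
    IsLocalMin.gradient_eq_zero (Filter.Eventually.of_forall hmin)
  have hgrad : ∀ x, β * ‖x - θstar‖ ^ 2 ≤ ⟪gradient f x, x - θstar⟫ := fun x => by
    simpa only [hgrad₀, sub_zero] using
      mul_sq_norm_sub_le_inner_gradient_sub_gradient hconv x θstar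
  suffices hstep : ∀ n : ℕ, 1 ≤ n → ∫ ω, ‖θ (n + 1) ω - θstar‖ ^ 2 ∂μ ≤
      (1 - 2 / n) * ∫ ω, ‖θ n ω - θstar‖ ^ 2 ∂μ + G ^ 2 / β ^ 2 / n ^ 2 by
    intro n hn
    calc _ ≤ 2 * (G ^ 2 / β ^ 2) / n :=
          le_two_mul_div_of_succ_le (fun n => integral_nonneg fun ω => sq_nonneg ‖θ n ω - θstar‖)
            hstep n hn
      _ = 2 * G ^ 2 / (β ^ 2 * n) := by field_simp
  intro n hn
  have hθstep : ∀ ω, θ (n + 1) ω - θstar = (θ n ω - θstar) - (1 / (β * n)) • g n ω :=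
    fun ω => by rw [hrec n hn ω, sub_right_comm]
  have hn₀ : (0 : ℝ) < n := by exact_mod_cast hn
  have hθint' := hθint (n + 1) (by omega)
  simp only [hθstep] at hθint' ⊢
  refine (integral_sq_norm_sub_smul_le (hθmeas n).comap_le hβ (by positivity)
    ((comap_measurable (θ n)).sub_const θstar) (hθint n hn) (hg2int n hn) hθint' ?_).trans ?_
  · filter_upwards [hunbiased n hn] with ω hω
    rw [hω]
    exact hgrad (θ n ω)
  · have hrate : 2 * (1 / (β * n)) * β = 2 / n := by field_simp
    have hnoise : (1 / (β * n)) ^ 2 * G ^ 2 = G ^ 2 / β ^ 2 / n ^ 2 := by field_simp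
    rw [hrate, ← hnoise]
    gcongr
    exact hg2 n hn

/-- **Lemma 1.** Under SGD with step sizes `η n = 1/(β n)` on a `β`-strongly convex
function with minimizer `θ*`, if `E[‖ĝ n‖²] ≤ G²` for all `n`, then every iterate
satisfies `E[‖θ n − θ*‖²] ≤ 2 G² / (β² n)` for all `n ≥ 1`. -/
theorem sgd_iterate_distance_bound
    {Ω : Type*} [MeasurableSpace Ω] {μ : Measure Ω} [IsProbabilityMeasure μ]
    {H : Type*} [NormedAddCommGroup H] [InnerProductSpace ℝ H] [CompleteSpace H]
    [MeasurableSpace H] [BorelSpace H]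
    {β G : ℝ} (hβ : 0 < β) (hG : 0 < G)
    {f : H → ℝ} (hdiff : Differentiable ℝ f)
    (hconv : ∀ x y : H,
      f y ≥ f x + ⟪gradient f x, y - x⟫ + β / 2 * ‖y - x‖ ^ 2)
    {θstar : H} (hmin : ∀ x : H, f θstar ≤ f x)
    (θ g : ℕ → Ω → H)
    (hθmeas : ∀ n, Measurable (θ n))
    (hgmeas : ∀ n, Measurable (g n))
    (hrec : ∀ n : ℕ, 1 ≤ n → ∀ ω, θ (n + 1) ω = θ n ω - (1 / (β * n)) • g n ω)
    (hunbiased : ∀ n : ℕ, 1 ≤ n →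
      μ[g n | MeasurableSpace.comap (θ n) inferInstance]
        =ᵐ[μ] fun ω => gradient f (θ n ω))
    (hg2int : ∀ n : ℕ, 1 ≤ n → Integrable (fun ω => ‖g n ω‖ ^ 2) μ)
    (hg2 : ∀ n : ℕ, 1 ≤ n → ∫ ω, ‖g n ω‖ ^ 2 ∂μ ≤ G ^ 2)
    (hθint : ∀ n : ℕ, 1 ≤ n → Integrable (fun ω => ‖θ n ω - θstar‖ ^ 2) μ) :
    ∀ n : ℕ, 1 ≤ n → ∫ ω, ‖θ n ω - θstar‖ ^ 2 ∂μ ≤ 2 * G ^ 2 / (β ^ 2 * n) :=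
  sgd_iterate_distance_bound_general hβ hconv hmin θ g hθmeas hrec hunbiased hg2int hg2 hθint
end

section
/- Let θ_1,…,θ_N be linearly independent vectors in a real vector space, let γ ∈ (0,1), and let θ^γ_1,…,θ^γ_N be the EMA sequence of θ_1,…,θ_N with rate γ. Fix indices 1 < n_1 < n_2 < n_3 ≤ N and coefficients c_1, c_2, c_3 ∈ (0,1) with c_1 + c_2 + c_3 = 1. Then there exists no γ' ∈ (0,1) such that c_1 θ^γ_{n_1} + c_2 θ^γ_{n_2} + c_3 θ^γ_{n_3} equals θ^{γ'}_m for some m ∈ {1,…,N}, where θ^{γ'}_1,…,θ^{γ'}_N is the EMA sequence of θ_1,…,θ_N with rate γ'. -/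
/-- The EMA sequence of `θ 1, θ 2, …` with rate `γ`:
`θ^γ 1 = θ 1` and `θ^γ n = γ • θ^γ (n−1) + (1−γ) • θ n` for `n ≥ 2`. -/
noncomputable def emaSeq {V : Type*} [AddCommGroup V] [Module ℝ V]
    (γ : ℝ) (θ : ℕ → V) : ℕ → V
  | 0 => θ 0
  | 1 => θ 1
  | n + 2 => γ • emaSeq γ θ (n + 1) + (1 - γ) • θ (n + 2)

/-- coefficient of `θ k` in `emaSeq γ θ n` (for `1 ≤ k`, `1 ≤ n`). -/
noncomputable def emaCoeff (γ : ℝ) (n k : ℕ) : ℝ :=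
  if k = 1 then γ ^ (n - 1) else if k ≤ n then (1 - γ) * γ ^ (n - k) else 0

lemma emaCoeff_one (γ : ℝ) (n : ℕ) : emaCoeff γ n 1 = γ ^ (n - 1) := by
  simp [emaCoeff]

lemma emaCoeff_of_le (γ : ℝ) {n k : ℕ} (h2 : 2 ≤ k) (hk : k ≤ n) :
    emaCoeff γ n k = (1 - γ) * γ ^ (n - k) := by
  have : k ≠ 1 := by omega
  simp [emaCoeff, this, hk]

lemma emaCoeff_of_gt (γ : ℝ) {n k : ℕ} (h2 : 2 ≤ k) (hk : n < k) :
    emaCoeff γ n k = 0 := by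
  have h1 : k ≠ 1 := by omega
  have h3 : ¬ k ≤ n := by omega
  simp [emaCoeff, h1, h3]

lemma emaSeq_succ {V : Type*} [AddCommGroup V] [Module ℝ V]
    (γ : ℝ) (θ : ℕ → V) {n : ℕ} (hn : 1 ≤ n) :
    emaSeq γ θ (n + 1) = γ • emaSeq γ θ n + (1 - γ) • θ (n + 1) := by
  match n, hn with
  | k + 1, _ => rfl

lemma emaSeq_eq_sum {V : Type*} [AddCommGroup V] [Module ℝ V]
    (γ : ℝ) (θ : ℕ → V) : ∀ {n : ℕ}, 1 ≤ n →
    emaSeq γ θ n = ∑ k ∈ Finset.Icc 1 n, emaCoeff γ n k • θ k := by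
  intro n hn
  induction n, hn using Nat.le_induction with
  | base => simp [emaSeq, emaCoeff]
  | succ n hn ih =>
    rw [emaSeq_succ γ θ hn, ih, Finset.sum_Icc_succ_top (by omega : 1 ≤ n + 1),
      Finset.smul_sum]
    congr 1
    · apply Finset.sum_congr rfl
      intro k hk
      simp only [Finset.mem_Icc] at hk
      rw [smul_smul]
      congr 1
      rcases eq_or_ne k 1 with rfl | hk1
      · rw [emaCoeff_one, emaCoeff_one]
        rw [← pow_succ']
        congr 1
        omega
      · have h2 : 2 ≤ k := by omega
        rw [emaCoeff_of_le γ h2 hk.2, emaCoeff_of_le γ h2 (by omega)]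
        rw [mul_left_comm, ← pow_succ']
        congr 2
        omega
    · rw [emaCoeff_of_le γ (by omega) le_rfl]
      simp

/-- **Theorem 3 (suboptimality of EMA).** If `θ 1, …, θ N` are linearly independent,
`γ ∈ (0,1)`, `1 < n₁ < n₂ < n₃ ≤ N`, and `c₁, c₂, c₃ ∈ (0,1)` with `c₁ + c₂ + c₃ = 1`,
then there is no rate `γ' ∈ (0,1)` such that
`c₁ • θ^γ n₁ + c₂ • θ^γ n₂ + c₃ • θ^γ n₃` is a member of the EMA sequence with rate `γ'`. -/
theorem ema_combination_not_ema
    {V : Type*} [AddCommGroup V] [Module ℝ V]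
    (N : ℕ) (θ : ℕ → V)
    (hli : LinearIndependent ℝ (fun i : Fin N => θ (i.1 + 1)))
    {γ : ℝ} (hγ : γ ∈ Set.Ioo (0 : ℝ) 1)
    (n₁ n₂ n₃ : ℕ) (h₁ : 1 < n₁) (h₁₂ : n₁ < n₂) (h₂₃ : n₂ < n₃) (h₃N : n₃ ≤ N)
    (c₁ c₂ c₃ : ℝ) (hc₁ : c₁ ∈ Set.Ioo (0 : ℝ) 1) (hc₂ : c₂ ∈ Set.Ioo (0 : ℝ) 1)
    (hc₃ : c₃ ∈ Set.Ioo (0 : ℝ) 1) (hsum : c₁ + c₂ + c₃ = 1) :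
    ¬ ∃ γ' : ℝ, γ' ∈ Set.Ioo (0 : ℝ) 1 ∧ ∃ m : ℕ, 1 ≤ m ∧ m ≤ N ∧
      c₁ • emaSeq γ θ n₁ + c₂ • emaSeq γ θ n₂ + c₃ • emaSeq γ θ n₃ = emaSeq γ' θ m := by
  rintro ⟨γ', hγ', m, hm1, hmN, heq⟩
  obtain ⟨hγ0, hγ1⟩ := hγ
  obtain ⟨hγ'0, hγ'1⟩ := hγ'
  obtain ⟨hc₁0, hc₁1⟩ := hc₁
  obtain ⟨hc₂0, hc₂1⟩ := hc₂
  obtain ⟨hc₃0, hc₃1⟩ := hc₃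
  -- extend sums to Icc 1 N
  have ext : ∀ (δ : ℝ) (n : ℕ), 1 ≤ n → n ≤ N →
      emaSeq δ θ n = ∑ k ∈ Finset.Icc 1 N, emaCoeff δ n k • θ k := by
    intro δ n h1 hN
    rw [emaSeq_eq_sum δ θ h1]
    apply Finset.sum_subset (Finset.Icc_subset_Icc le_rfl hN)
    intro k hk hk'
    simp only [Finset.mem_Icc] at hk hk'
    have h2 : 2 ≤ k := by omega
    have h3 : n < k := by omega
    rw [emaCoeff_of_gt δ h2 h3, zero_smul]
  rw [ext γ n₁ (by omega) (by omega), ext γ n₂ (by omega) (by omega),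
    ext γ n₃ (by omega) (by omega), ext γ' m hm1 hmN] at heq
  set g : ℕ → ℝ := fun k =>
    c₁ * emaCoeff γ n₁ k + c₂ * emaCoeff γ n₂ k + c₃ * emaCoeff γ n₃ k
      - emaCoeff γ' m k with hg
  have key : ∑ k ∈ Finset.Icc 1 N, g k • θ k = 0 := by
    have : ∑ k ∈ Finset.Icc 1 N, g k • θ k =
        (c₁ • ∑ k ∈ Finset.Icc 1 N, emaCoeff γ n₁ k • θ k)
        + (c₂ • ∑ k ∈ Finset.Icc 1 N, emaCoeff γ n₂ k • θ k)
        + (c₃ • ∑ k ∈ Finset.Icc 1 N, emaCoeff γ n₃ k • θ k)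
        - ∑ k ∈ Finset.Icc 1 N, emaCoeff γ' m k • θ k := by
      simp only [Finset.smul_sum, ← Finset.sum_sub_distrib, ← Finset.sum_add_distrib]
      apply Finset.sum_congr rfl
      intro k _
      simp [hg, add_smul, sub_smul, smul_smul]
    rw [this, heq]
    abel
  have hfin : ∑ i : Fin N, g (i.1 + 1) • θ (i.1 + 1) = 0 := by
    rw [Fin.sum_univ_eq_sum_range (fun i => g (i + 1) • θ (i + 1)) N, ← key]
    apply Finset.sum_nbij' (fun i => i + 1) (fun k => k - 1) <;>
      intros <;> simp_all <;> omega
  have hcoeff := Fintype.linearIndependent_iff.mp hli (fun i => g (i.1 + 1)) hfin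
  have E : ∀ k : ℕ, 1 ≤ k → k ≤ N →
      c₁ * emaCoeff γ n₁ k + c₂ * emaCoeff γ n₂ k + c₃ * emaCoeff γ n₃ k
        = emaCoeff γ' m k := by
    intro k hk1 hkN
    have h := hcoeff ⟨k - 1, by omega⟩
    have hk : k - 1 + 1 = k := by omega
    simp only [hg, hk] at h
    linarith
  -- m = n₃
  have h1γ : (0:ℝ) < 1 - γ := by linarith
  have h1γ' : (0:ℝ) < 1 - γ' := by linarith
  have E3 := E n₃ (by omega) h₃N
  rw [emaCoeff_of_gt γ (by omega) (by omega), emaCoeff_of_gt γ (by omega) h₂₃,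
    emaCoeff_of_le γ (by omega) le_rfl] at E3
  have hmge : n₃ ≤ m := by
    by_contra h
    rw [emaCoeff_of_gt γ' (by omega) (by omega)] at E3
    have hp : (0:ℝ) < c₃ * ((1 - γ) * γ ^ (n₃ - n₃)) :=
      mul_pos hc₃0 (mul_pos h1γ (pow_pos hγ0 _))
    linarith
  have hmeq : m = n₃ := by
    by_contra h
    have hlt : n₃ < m := lt_of_le_of_ne hmge (Ne.symm h)
    have Em := E m (by omega) hmN
    rw [emaCoeff_of_gt γ (by omega) (by omega), emaCoeff_of_gt γ (by omega) (by omega),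
      emaCoeff_of_gt γ (by omega) hlt, emaCoeff_of_le γ' (by omega) le_rfl] at Em
    have h0 : m - m = 0 := by omega
    rw [h0, pow_zero] at Em
    nlinarith
  rw [hmeq] at E
  clear E3
  have E3 := E n₃ (by omega) h₃N
  rw [emaCoeff_of_gt γ (by omega) (by omega), emaCoeff_of_gt γ (by omega) h₂₃,
    emaCoeff_of_le γ (by omega) le_rfl, emaCoeff_of_le γ' (by omega) le_rfl] at E3
  have h0 : n₃ - n₃ = 0 := by omega
  rw [h0, pow_zero] at E3
  have Eq1 : c₃ * (1 - γ) = 1 - γ' := by linarith [E3]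
  -- establish γ' = γ by case analysis
  have hgg : γ' = γ := by
    by_cases hA : n₂ + 1 < n₃
    · -- use k = n₃ - 1
      have Ea := E (n₃ - 1) (by omega) (by omega)
      rw [emaCoeff_of_gt γ (by omega) (by omega), emaCoeff_of_gt γ (by omega) (by omega),
        emaCoeff_of_le γ (by omega) (by omega : n₃ - 1 ≤ n₃),
        emaCoeff_of_le γ' (by omega) (by omega : n₃ - 1 ≤ n₃)] at Ea
      have e1 : n₃ - (n₃ - 1) = 1 := by omega
      rw [e1, pow_one] at Ea
      have h2 : (1 - γ') * γ' = (1 - γ') * γ := by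
        linear_combination γ * Eq1 - Ea
      exact mul_left_cancel₀ (by linarith) h2
    · have hn32 : n₃ = n₂ + 1 := by omega
      by_cases hB : n₁ + 1 < n₂
      · -- use k = n₂ and k = n₂ - 1
        have Ea := E n₂ (by omega) (by omega)
        rw [emaCoeff_of_gt γ (by omega) h₁₂, emaCoeff_of_le γ (by omega) le_rfl,
          emaCoeff_of_le γ (by omega) (by omega : n₂ ≤ n₃),
          emaCoeff_of_le γ' (by omega) (by omega : n₂ ≤ n₃)] at Ea
        have e1 : n₂ - n₂ = 0 := by omega
        have e2 : n₃ - n₂ = 1 := by omega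
        rw [e1, e2, pow_zero, pow_one] at Ea
        have Eb := E (n₂ - 1) (by omega) (by omega)
        rw [emaCoeff_of_gt γ (by omega) (by omega),
          emaCoeff_of_le γ (by omega) (by omega : n₂ - 1 ≤ n₂),
          emaCoeff_of_le γ (by omega) (by omega : n₂ - 1 ≤ n₃),
          emaCoeff_of_le γ' (by omega) (by omega : n₂ - 1 ≤ n₃)] at Eb
        have e3 : n₂ - (n₂ - 1) = 1 := by omega
        have e4 : n₃ - (n₂ - 1) = 2 := by omega
        rw [e3, e4, pow_one] at Eb
        have hpos : (0:ℝ) < (1 - γ') * γ' := by positivity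
        have h2 : ((1 - γ') * γ') * γ = ((1 - γ') * γ') * γ' := by
          linear_combination Eb - γ * Ea
        exact (mul_left_cancel₀ (ne_of_gt hpos) h2).symm
      · have hn21 : n₂ = n₁ + 1 := by omega
        by_cases hC : 3 ≤ n₁
        · -- use k = n₁ and k = n₁ - 1
          have Ea := E n₁ (by omega) (by omega)
          rw [emaCoeff_of_le γ (by omega) le_rfl,
            emaCoeff_of_le γ (by omega) (by omega : n₁ ≤ n₂),
            emaCoeff_of_le γ (by omega) (by omega : n₁ ≤ n₃),
            emaCoeff_of_le γ' (by omega) (by omega : n₁ ≤ n₃)] at Ea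
          have e1 : n₁ - n₁ = 0 := by omega
          have e2 : n₂ - n₁ = 1 := by omega
          have e3 : n₃ - n₁ = 2 := by omega
          rw [e1, e2, e3, pow_zero, pow_one] at Ea
          have Eb := E (n₁ - 1) (by omega) (by omega)
          rw [emaCoeff_of_le γ (by omega) (by omega : n₁ - 1 ≤ n₁),
            emaCoeff_of_le γ (by omega) (by omega : n₁ - 1 ≤ n₂),
            emaCoeff_of_le γ (by omega) (by omega : n₁ - 1 ≤ n₃),
            emaCoeff_of_le γ' (by omega) (by omega : n₁ - 1 ≤ n₃)] at Eb
          have e4 : n₁ - (n₁ - 1) = 1 := by omega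
          have e5 : n₂ - (n₁ - 1) = 2 := by omega
          have e6 : n₃ - (n₁ - 1) = 3 := by omega
          rw [e4, e5, e6, pow_one] at Eb
          have hpos : (0:ℝ) < (1 - γ') * γ' ^ 2 := by positivity
          have h2 : ((1 - γ') * γ' ^ 2) * γ = ((1 - γ') * γ' ^ 2) * γ' := by
            linear_combination Eb - γ * Ea
          exact (mul_left_cancel₀ (ne_of_gt hpos) h2).symm
        · -- n₁ = 2, n₂ = 3, n₃ = 4; use k = 2 and k = 1
          have hn1 : n₁ = 2 := by omega
          have Ea := E n₁ (by omega) (by omega)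
          rw [emaCoeff_of_le γ (by omega) le_rfl,
            emaCoeff_of_le γ (by omega) (by omega : n₁ ≤ n₂),
            emaCoeff_of_le γ (by omega) (by omega : n₁ ≤ n₃),
            emaCoeff_of_le γ' (by omega) (by omega : n₁ ≤ n₃)] at Ea
          have e1 : n₁ - n₁ = 0 := by omega
          have e2 : n₂ - n₁ = 1 := by omega
          have e3 : n₃ - n₁ = 2 := by omega
          rw [e1, e2, e3, pow_zero, pow_one] at Ea
          have Eb := E 1 (by omega) (by omega)
          rw [emaCoeff_one, emaCoeff_one, emaCoeff_one, emaCoeff_one] at Eb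
          have e4 : n₁ - 1 = 1 := by omega
          have e5 : n₂ - 1 = 2 := by omega
          have e6 : n₃ - 1 = 3 := by omega
          rw [e4, e5, e6, pow_one] at Eb
          have hpos : (0:ℝ) < γ' ^ 2 := by positivity
          have h2 : γ' ^ 2 * γ = γ' ^ 2 * γ' := by
            linear_combination (1 - γ) * Eb - γ * Ea
          exact (mul_left_cancel₀ (ne_of_gt hpos) h2).symm
  rw [hgg] at Eq1
  nlinarith [mul_pos h1γ (show (0:ℝ) < 1 - c₃ by linarith)]
end

section
/- Under the SGD setting with β-strong convexity, E[‖ĝ_n‖²] ≤ G² for all n, and step sizes η_n = 1/(βn), for every n ≥ 1 the iterates satisfy the recursion E[‖θ_{n+1} − θ*‖²] ≤ (1 − 2/n)·E[‖θ_n − θ*‖²] + G²/(β² n²). -/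
open MeasureTheory Set TopologicalSpace
open scoped RealInnerProductSpace

/-!
Write `X = θₙ - θ*` and `η = 1/(βn)`. Expanding the square,
`E‖θₙ₊₁ - θ*‖² = E‖X‖² - 2η E⟪ĝₙ, X⟫ + η² E‖ĝₙ‖²`. Since `X` is a function of `θₙ`, the tower
property turns `E⟪ĝₙ, X⟫` into `E⟪∇f(θₙ), X⟫`, and strong convexity makes `∇f` strongly monotone
with `∇f(θ*) = 0`, so `⟪∇f(x), x - θ*⟫ ≥ β‖x - θ*‖²`. Hence the middle term is at most
`-(2/n) E‖X‖²`, and the last one is at most `G²/(β²n²)`.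

Since `H` need not be separable, `θₙ` is only Borel measurable; the tower property needs it to be
strongly measurable. This holds because `θₙ` is a.e. recovered from the strongly measurable
`E[ĝₙ | θₙ] = ∇f(θₙ)` through the inverse of `∇f`, which is Lipschitz on the range of `∇f`.
-/

theorem AntilipschitzWith.isSeparable_preimage {α β : Type*} [EMetricSpace α]
    [PseudoEMetricSpace β] {K : NNReal} {f : α → β} (hf : AntilipschitzWith K f) {s : Set β}
    (hs : IsSeparable s) : IsSeparable (f ⁻¹' s) := by
  rcases isEmpty_or_nonempty α with _ | _
  · rw [eq_empty_of_isEmpty (f ⁻¹' s)]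
    exact finite_empty.isSeparable
  set t := s ∩ range f
  have hinv : RightInvOn (Function.invFun f) f t := fun y hy => Function.invFun_eq hy.2
  have ht : IsSeparable (univ : Set t) :=
    isSeparable_univ_iff.2 (hs.mono inter_subset_left).separableSpace
  refine (ht.image (hf.to_rightInvOn hinv).continuous).mono fun x hx => ?_
  exact ⟨⟨f x, hx, x, rfl⟩, trivial, Function.leftInverse_invFun hf.injective x⟩

section Measurability

variable {Ω E : Type*} {m m0 : MeasurableSpace Ω} {μ : Measure[m0] Ω}
  [NormedAddCommGroup E] [MeasurableSpace E] [BorelSpace E]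

theorem aestronglyMeasurable_of_ae_mem_isSeparable {f : Ω → E} (hf : Measurable[m] f)
    {t : Set E} (ht : IsSeparable t) (hft : ∀ᵐ ω ∂μ, f ω ∈ t) :
    AEStronglyMeasurable[m] f μ := by
  have hB : MeasurableSet[m] (f ⁻¹' closure t) := hf isClosed_closure.measurableSet
  refine ⟨(f ⁻¹' closure t).indicator f,
    stronglyMeasurable_iff_measurable_separable.2 ⟨hf.indicator hB, ?_⟩, ?_⟩
  · refine (ht.closure.union (finite_singleton 0).isSeparable).mono ?_
    rintro - ⟨ω, rfl⟩
    by_cases hω : ω ∈ f ⁻¹' closure t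
    · exact Or.inl (by rwa [indicator_of_mem hω])
    · exact Or.inr (indicator_of_notMem hω f)
  · filter_upwards [hft] with ω hω
    have hmem : ω ∈ f ⁻¹' closure t := subset_closure hω
    exact (indicator_of_mem hmem f).symm

theorem aestronglyMeasurable_of_comp_ae_eq {F : Type*} [PseudoMetricSpace F] {K : NNReal}
    {T : E → F} (hT : AntilipschitzWith K T) {θ : Ω → E} {h : Ω → F} (hθ : Measurable[m] θ)
    (hh : StronglyMeasurable[m] h) (hTθ : h =ᵐ[μ] fun ω => T (θ ω)) :
    AEStronglyMeasurable[m] θ μ :=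
  aestronglyMeasurable_of_ae_mem_isSeparable hθ (hT.isSeparable_preimage hh.isSeparable_range)
    (hTθ.mono fun ω hω => ⟨ω, hω⟩)

end Measurability

section InnerProduct

variable {H : Type*} [NormedAddCommGroup H] [InnerProductSpace ℝ H]

theorem inner_gradient_sub_ge_of_strongly_convex [CompleteSpace H] {β : ℝ} {f : H → ℝ}
    (hconv : ∀ x y : H, f y ≥ f x + ⟪gradient f x, y - x⟫ + β / 2 * ‖y - x‖ ^ 2) (x y : H) :
    β * ‖x - y‖ ^ 2 ≤ ⟪gradient f x - gradient f y, x - y⟫ := by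
  have hxy := hconv x y
  have hyx := hconv y x
  rw [← neg_sub x y, inner_neg_right, norm_neg] at hxy
  rw [inner_sub_left]
  linarith

theorem antilipschitzWith_of_strongly_monotone {β : ℝ} (hβ : 0 < β) {T : H → H}
    (hT : ∀ x y, β * ‖x - y‖ ^ 2 ≤ ⟪T x - T y, x - y⟫) :
    AntilipschitzWith (Real.toNNReal β⁻¹) T := by
  refine AntilipschitzWith.of_le_mul_dist fun x y => ?_
  rw [Real.coe_toNNReal _ (inv_nonneg.2 hβ.le), dist_eq_norm, dist_eq_norm,
    le_inv_mul_iff₀ hβ]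
  have hcs := (hT x y).trans (real_inner_le_norm _ _)
  rcases (norm_nonneg (x - y)).eq_or_lt with h | h
  · rw [← h, mul_zero]
    exact norm_nonneg _
  · nlinarith

theorem integrable_inner_of_memLp_two {Ω : Type*} {m0 : MeasurableSpace Ω} {μ : Measure Ω}
    {g X : Ω → H} (hg : MemLp g 2 μ) (hX : MemLp X 2 μ) :
    Integrable (fun ω => ⟪g ω, X ω⟫) μ := by
  refine (L2.integrable_inner (𝕜 := ℝ) (hg.toLp g) (hX.toLp X)).congr ?_
  filter_upwards [hg.coeFn_toLp, hX.coeFn_toLp] with ω hgω hXω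
  rw [hgω, hXω]

theorem integral_inner_condExp_eq [CompleteSpace H] {Ω : Type*} {m m0 : MeasurableSpace Ω}
    {μ : Measure Ω} [IsFiniteMeasure μ] (hm : m ≤ m0) {g X : Ω → H} (hg : MemLp g 2 μ)
    (hX : MemLp X 2 μ) (hXm : AEStronglyMeasurable[m] X μ) :
    ∫ ω, ⟪(μ[g | m]) ω, X ω⟫ ∂μ = ∫ ω, ⟪g ω, X ω⟫ ∂μ := by
  set gL := hg.toLp g
  set XL := hX.toLp X
  calc ∫ ω, ⟪(μ[g | m]) ω, X ω⟫ ∂μ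
      = ∫ ω, ⟪(condExpL2 H ℝ hm gL : Lp H 2 μ) ω, XL ω⟫ ∂μ := by
        refine integral_congr_ae ?_
        filter_upwards [hg.condExpL2_ae_eq_condExp (𝕜 := ℝ) hm, hX.coeFn_toLp] with ω hcω hXω
        rw [hcω, hXω]
    _ = ⟪(condExpL2 H ℝ hm gL : Lp H 2 μ), XL⟫ := (L2.inner_def _ _).symm
    _ = ⟪gL, XL⟫ := inner_condExpL2_eq_inner_fun hm gL XL (hXm.congr hX.coeFn_toLp.symm)
    _ = ∫ ω, ⟪g ω, X ω⟫ ∂μ := by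
        rw [L2.inner_def]
        refine integral_congr_ae ?_
        filter_upwards [hg.coeFn_toLp, hX.coeFn_toLp] with ω hgω hXω
        rw [hgω, hXω]

theorem integral_norm_sub_smul_sq {Ω : Type*} {m0 : MeasurableSpace Ω} {μ : Measure Ω}
    {X g : Ω → H} (η : ℝ) (hX : Integrable (fun ω => ‖X ω‖ ^ 2) μ)
    (hgX : Integrable (fun ω => ⟪g ω, X ω⟫) μ) (hg : Integrable (fun ω => ‖g ω‖ ^ 2) μ) :
    ∫ ω, ‖X ω - η • g ω‖ ^ 2 ∂μ =
      ∫ ω, ‖X ω‖ ^ 2 ∂μ - 2 * η * ∫ ω, ⟪g ω, X ω⟫ ∂μ + η ^ 2 * ∫ ω, ‖g ω‖ ^ 2 ∂μ := by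
  have hpt : ∀ ω, ‖X ω - η • g ω‖ ^ 2 =
      ‖X ω‖ ^ 2 - 2 * η * ⟪g ω, X ω⟫ + η ^ 2 * ‖g ω‖ ^ 2 := fun ω => by
    rw [norm_sub_sq_real, real_inner_smul_right, norm_smul, mul_pow, Real.norm_eq_abs, sq_abs,
      real_inner_comm]
    ring
  have hdiff : Integrable (fun ω => ‖X ω‖ ^ 2 - 2 * η * ⟪g ω, X ω⟫) μ :=
    hX.sub (hgX.const_mul _)
  simp_rw [hpt]
  rw [integral_add hdiff (hg.const_mul _),
    integral_sub hX (hgX.const_mul _), integral_const_mul, integral_const_mul]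

theorem integral_inner_ge_of_condExp_ae_eq [CompleteSpace H] [MeasurableSpace H] [BorelSpace H]
    {Ω : Type*} [MeasurableSpace Ω] {μ : Measure Ω} [IsFiniteMeasure μ] {β : ℝ} (hβ : 0 < β)
    {T : H → H} (hT : ∀ x y, β * ‖x - y‖ ^ 2 ≤ ⟪T x - T y, x - y⟫) {θstar : H}
    (hTstar : T θstar = 0) {θ g : Ω → H} (hθ : Measurable θ)
    (hcond : μ[g | MeasurableSpace.comap θ inferInstance] =ᵐ[μ] fun ω => T (θ ω))
    (hg : Integrable (fun ω => ‖g ω‖ ^ 2) μ) (hθ2 : Integrable (fun ω => ‖θ ω - θstar‖ ^ 2) μ) :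
    Integrable (fun ω => ⟪g ω, θ ω - θstar⟫) μ ∧
      β * ∫ ω, ‖θ ω - θstar‖ ^ 2 ∂μ ≤ ∫ ω, ⟪g ω, θ ω - θstar⟫ ∂μ := by
  have hdrift (x : H) : β * ‖x - θstar‖ ^ 2 ≤ ⟪T x, x - θstar⟫ := by
    simpa [hTstar] using hT x θstar
  by_cases hgi : Integrable g μ
  · have hm := hθ.comap_le
    have hgL2 : MemLp g 2 μ := (memLp_two_iff_integrable_sq_norm hgi.1).2 hg
    have hXm : AEStronglyMeasurable[MeasurableSpace.comap θ inferInstance]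
        (fun ω => θ ω - θstar) μ :=
      (aestronglyMeasurable_of_comp_ae_eq (antilipschitzWith_of_strongly_monotone hβ hT)
        (comap_measurable θ) stronglyMeasurable_condExp hcond).sub aestronglyMeasurable_const
    have hXL2 : MemLp (fun ω => θ ω - θstar) 2 μ :=
      (memLp_two_iff_integrable_sq_norm (hXm.mono hm)).2 hθ2
    have htower := integral_inner_condExp_eq hm hgL2 hXL2 hXm
    have hTθ : (fun ω => ⟪(μ[g | MeasurableSpace.comap θ inferInstance]) ω, θ ω - θstar⟫)
        =ᵐ[μ] fun ω => ⟪T (θ ω), θ ω - θstar⟫ :=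
      hcond.mono fun ω hω => congrArg (⟪·, θ ω - θstar⟫) hω
    refine ⟨integrable_inner_of_memLp_two hgL2 hXL2, ?_⟩
    rw [← htower, integral_congr_ae hTθ, ← integral_const_mul]
    exact integral_mono (hθ2.const_mul β)
      ((integrable_inner_of_memLp_two (hgL2.condExp one_le_two) hXL2).congr hTθ)
      fun ω => hdrift (θ ω)
  · -- Then `E[g | θ]` is the junk value `0`, which forces `θ = θstar` a.e.
    have hθstar : ∀ᵐ ω ∂μ, θ ω - θstar = 0 := by
      filter_upwards [hcond] with ω hω
      have h := hdrift (θ ω)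
      rw [← hω, condExp_of_not_integrable hgi, Pi.zero_apply, inner_zero_left] at h
      exact norm_eq_zero.1 (pow_eq_zero_iff two_ne_zero |>.1
        (le_antisymm (nonpos_of_mul_nonpos_right h hβ) (sq_nonneg _)))
    have hinner : (fun ω => ⟪g ω, θ ω - θstar⟫) =ᵐ[μ] 0 :=
      hθstar.mono fun ω hω => by simp [hω]
    have hsq : (fun ω => ‖θ ω - θstar‖ ^ 2) =ᵐ[μ] 0 :=
      hθstar.mono fun ω hω => by simp [hω]
    refine ⟨(integrable_zero _ _ _).congr hinner.symm, ?_⟩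
    rw [integral_congr_ae hinner, integral_congr_ae hsq]
    simp

end InnerProduct

theorem sgd_distance_recursion_general
    {Ω : Type*} [MeasurableSpace Ω] {μ : Measure Ω} [IsProbabilityMeasure μ]
    {H : Type*} [NormedAddCommGroup H] [InnerProductSpace ℝ H] [CompleteSpace H]
    [MeasurableSpace H] [BorelSpace H]
    {β G : ℝ} (hβ : 0 < β)
    {f : H → ℝ}
    (hconv : ∀ x y : H,
      f y ≥ f x + ⟪gradient f x, y - x⟫ + β / 2 * ‖y - x‖ ^ 2)
    {θstar : H} (hmin : ∀ x : H, f θstar ≤ f x)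
    (θ g : ℕ → Ω → H)
    (hθmeas : ∀ n, Measurable (θ n))
    (hrec : ∀ n : ℕ, 1 ≤ n → ∀ ω, θ (n + 1) ω = θ n ω - (1 / (β * n)) • g n ω)
    (hunbiased : ∀ n : ℕ, 1 ≤ n →
      μ[g n | MeasurableSpace.comap (θ n) inferInstance]
        =ᵐ[μ] fun ω => gradient f (θ n ω))
    (hg2int : ∀ n : ℕ, 1 ≤ n → Integrable (fun ω => ‖g n ω‖ ^ 2) μ)
    (hg2 : ∀ n : ℕ, 1 ≤ n → ∫ ω, ‖g n ω‖ ^ 2 ∂μ ≤ G ^ 2)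
    (hθint : ∀ n : ℕ, 1 ≤ n → Integrable (fun ω => ‖θ n ω - θstar‖ ^ 2) μ) :
    ∀ n : ℕ, 1 ≤ n →
      ∫ ω, ‖θ (n + 1) ω - θstar‖ ^ 2 ∂μ ≤
        (1 - 2 / (n : ℝ)) * ∫ ω, ‖θ n ω - θstar‖ ^ 2 ∂μ + G ^ 2 / (β ^ 2 * (n : ℝ) ^ 2) := by
  intro n hn
  have hn' : (0 : ℝ) < n := by exact_mod_cast hn
  have hgrad : gradient f θstar = 0 := by
    rw [gradient, IsLocalMin.fderiv_eq_zero (Filter.Eventually.of_forall hmin), map_zero]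
  obtain ⟨hint, hdescent⟩ := integral_inner_ge_of_condExp_ae_eq hβ
    (inner_gradient_sub_ge_of_strongly_convex hconv) hgrad (hθmeas n) (hunbiased n hn)
    (hg2int n hn) (hθint n hn)
  have hstep (ω : Ω) : θ (n + 1) ω - θstar = (θ n ω - θstar) - (1 / (β * n)) • g n ω := by
    rw [hrec n hn ω]
    abel
  simp_rw [hstep]
  rw [integral_norm_sub_smul_sq _ (hθint n hn) hint (hg2int n hn)]
  set A := ∫ ω, ‖θ n ω - θstar‖ ^ 2 ∂μ
  calc A - 2 * (1 / (β * n)) * ∫ ω, ⟪g n ω, θ n ω - θstar⟫ ∂μ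
        + (1 / (β * n)) ^ 2 * ∫ ω, ‖g n ω‖ ^ 2 ∂μ
      ≤ A - 2 * (1 / (β * n)) * (β * A) + (1 / (β * n)) ^ 2 * G ^ 2 := by
        gcongr
        exact hg2 n hn
    _ = (1 - 2 / (n : ℝ)) * A + G ^ 2 / (β ^ 2 * (n : ℝ) ^ 2) := by
        field_simp

/-- Under SGD with step sizes `η n = 1/(β n)` on a `β`-strongly convex function with
minimizer `θ*` and `E[‖ĝ n‖²] ≤ G²`, for every `n ≥ 1` the iterates satisfy the recursion
`E[‖θ (n+1) − θ*‖²] ≤ (1 − 2/n) E[‖θ n − θ*‖²] + G²/(β² n²)`. -/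
theorem sgd_distance_recursion
    {Ω : Type*} [MeasurableSpace Ω] {μ : Measure Ω} [IsProbabilityMeasure μ]
    {H : Type*} [NormedAddCommGroup H] [InnerProductSpace ℝ H] [CompleteSpace H]
    [MeasurableSpace H] [BorelSpace H]
    {β G : ℝ} (hβ : 0 < β) (hG : 0 < G)
    {f : H → ℝ} (hdiff : Differentiable ℝ f)
    (hconv : ∀ x y : H,
      f y ≥ f x + ⟪gradient f x, y - x⟫ + β / 2 * ‖y - x‖ ^ 2)
    {θstar : H} (hmin : ∀ x : H, f θstar ≤ f x)
    (θ g : ℕ → Ω → H)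
    (hθmeas : ∀ n, Measurable (θ n))
    (hgmeas : ∀ n, Measurable (g n))
    (hrec : ∀ n : ℕ, 1 ≤ n → ∀ ω, θ (n + 1) ω = θ n ω - (1 / (β * n)) • g n ω)
    (hunbiased : ∀ n : ℕ, 1 ≤ n →
      μ[g n | MeasurableSpace.comap (θ n) inferInstance]
        =ᵐ[μ] fun ω => gradient f (θ n ω))
    (hg2int : ∀ n : ℕ, 1 ≤ n → Integrable (fun ω => ‖g n ω‖ ^ 2) μ)
    (hg2 : ∀ n : ℕ, 1 ≤ n → ∫ ω, ‖g n ω‖ ^ 2 ∂μ ≤ G ^ 2)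
    (hθint : ∀ n : ℕ, 1 ≤ n → Integrable (fun ω => ‖θ n ω - θstar‖ ^ 2) μ) :
    ∀ n : ℕ, 1 ≤ n →
      ∫ ω, ‖θ (n + 1) ω - θstar‖ ^ 2 ∂μ ≤
        (1 - 2 / (n : ℝ)) * ∫ ω, ‖θ n ω - θstar‖ ^ 2 ∂μ + G ^ 2 / (β ^ 2 * (n : ℝ) ^ 2) :=
  sgd_distance_recursion_general hβ hconv hmin θ g hθmeas hrec hunbiased hg2int hg2 hθint
end

section
/- There exist no real numbers γ, γ' ∈ (0,1) and c_2, c_3 ∈ (0,1) satisfying simultaneously (1 − γ)·c_3 = 1 − γ', (1 − γ')·γ' = (1 − γ)·γ·c_3 + (1 − γ)·c_2, and (1 − γ')·γ'² = (1 − γ)·γ²·c_3 + (1 − γ)·γ·c_2. -/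
/-- Algebraic core of Case 2 (`n₂ = n₃ − 1` and `n₁ < n₂ − 1`): there are no
`γ, γ' ∈ (0,1)` and `c₂, c₃ ∈ (0,1)` with `(1 − γ) c₃ = 1 − γ'`,
`(1 − γ') γ' = (1 − γ) γ c₃ + (1 − γ) c₂`, and
`(1 − γ') γ'² = (1 − γ) γ² c₃ + (1 − γ) γ c₂`. -/
theorem ema_case2_no_solution :
    ¬ ∃ γ γ' c₂ c₃ : ℝ,
      γ ∈ Set.Ioo (0 : ℝ) 1 ∧ γ' ∈ Set.Ioo (0 : ℝ) 1 ∧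
      c₂ ∈ Set.Ioo (0 : ℝ) 1 ∧ c₃ ∈ Set.Ioo (0 : ℝ) 1 ∧
      (1 - γ) * c₃ = 1 - γ' ∧
      (1 - γ') * γ' = (1 - γ) * γ * c₃ + (1 - γ) * c₂ ∧
      (1 - γ') * γ' ^ 2 = (1 - γ) * γ ^ 2 * c₃ + (1 - γ) * γ * c₂ := by
  rintro ⟨γ, γ', c₂, c₃, ⟨hγ0, hγ1⟩, ⟨hγ'0, hγ'1⟩, ⟨hc₂0, hc₂1⟩, ⟨hc₃0, hc₃1⟩, h1, h2, h3⟩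
  have hgt : (1 - γ') * (γ' - γ) = (1 - γ) * c₂ := by nlinarith [h1, h2]
  have hpos : (1 - γ) * c₂ > 0 := mul_pos (by linarith) hc₂0
  have hδ : γ' - γ > 0 := by nlinarith
  have hz : (1 - γ') * γ' * (γ' - γ) = 0 := by nlinarith [h1, h3]
  nlinarith [mul_pos (mul_pos (by linarith : (0:ℝ) < 1 - γ') hγ'0) hδ]
end

section
/- There exist no real numbers γ, γ' ∈ (0,1) and c_1, c_2, c_3 ∈ (0,1) with c_1 + c_2 + c_3 = 1 satisfying simultaneously (1 − γ)·c_3 = 1 − γ', (1 − γ')·γ' = (1 − γ)·γ·c_3 + (1 − γ)·c_2, (1 − γ')·γ'² = (1 − γ)·γ²·c_3 + (1 − γ)·γ·c_2 + (1 − γ)·c_1, and (1 − γ')·γ'³ = (1 − γ)·γ³·c_3 + (1 − γ)·γ²·c_2 + (1 − γ)·γ·c_1. -/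
/-- Algebraic core of Case 3 (`n₂ = n₃ − 1` and `n₁ = n₂ − 1`): there are no
`γ, γ' ∈ (0,1)` and `c₁, c₂, c₃ ∈ (0,1)` with `c₁ + c₂ + c₃ = 1` satisfying
`(1 − γ) c₃ = 1 − γ'`,
`(1 − γ') γ' = (1 − γ) γ c₃ + (1 − γ) c₂`,
`(1 − γ') γ'² = (1 − γ) γ² c₃ + (1 − γ) γ c₂ + (1 − γ) c₁`, and
`(1 − γ') γ'³ = (1 − γ) γ³ c₃ + (1 − γ) γ² c₂ + (1 − γ) γ c₁`. -/
theorem ema_case3_no_solution :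
    ¬ ∃ γ γ' c₁ c₂ c₃ : ℝ,
      γ ∈ Set.Ioo (0 : ℝ) 1 ∧ γ' ∈ Set.Ioo (0 : ℝ) 1 ∧
      c₁ ∈ Set.Ioo (0 : ℝ) 1 ∧ c₂ ∈ Set.Ioo (0 : ℝ) 1 ∧ c₃ ∈ Set.Ioo (0 : ℝ) 1 ∧
      c₁ + c₂ + c₃ = 1 ∧
      (1 - γ) * c₃ = 1 - γ' ∧
      (1 - γ') * γ' = (1 - γ) * γ * c₃ + (1 - γ) * c₂ ∧
      (1 - γ') * γ' ^ 2 = (1 - γ) * γ ^ 2 * c₃ + (1 - γ) * γ * c₂ + (1 - γ) * c₁ ∧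
      (1 - γ') * γ' ^ 3 = (1 - γ) * γ ^ 3 * c₃ + (1 - γ) * γ ^ 2 * c₂ + (1 - γ) * γ * c₁ := by
  rintro ⟨γ, γ', c₁, c₂, c₃, ⟨hγ0, hγ1⟩, ⟨hγ'0, hγ'1⟩, _, ⟨hc₂0, _⟩, _, _, e0, e1, e2, e3⟩
  have h2 : (1 - γ) * c₂ = (1 - γ') * (γ' - γ) := by linear_combination -e1 - γ * e0
  have h3 : (1 - γ) * c₁ = (1 - γ') * γ' * (γ' - γ) := by
    linear_combination -e2 - γ ^ 2 * e0 - γ * h2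
  have h4 : (1 - γ') * γ' ^ 2 * (γ' - γ) = 0 := by
    linear_combination e3 + γ ^ 3 * e0 + γ ^ 2 * h2 + γ * h3
  have h5 : (0 : ℝ) < (1 - γ') * γ' ^ 2 :=
    mul_pos (by linarith) (by positivity)
  have hne : γ' = γ := by
    rcases mul_eq_zero.mp h4 with h | h
    · exact absurd h (ne_of_gt h5)
    · linarith
  have hz : (1 - γ) * c₂ = 0 := by rw [h2, hne]; ring
  nlinarith
end
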